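/- Let H_k be the hard-thresholding operator (projection onto k-sparse vectors). For any γ ∈ ℝ^p and any k-sparse β* ∈ ℝ^p, ‖H_k(γ) − β*‖₂² ≤ 2⟨H_k(γ) − β*, γ − β*⟩. -/
import Mathlib


open Finset

/-- A vector is `k`-sparse if it has at most `k` nonzero entries. -/
def IsSparse {p : ℕ} (k : ℕ) (β : Fin p → ℝ) : Prop :=
  Set.ncard {i | β i ≠ 0} ≤ k

/-- `v` is a hard thresholding of `γ` to its `k` largest-magnitude coordinates. -/
def IsHardThreshold {p : ℕ} (k : ℕ) (γ v : Fin p → ℝ) : Prop :=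
  ∃ S : Finset (Fin p), S.card = k ∧
    (∀ i ∈ S, ∀ j ∉ S, |γ j| ≤ |γ i|) ∧
    (∀ i, v i = if i ∈ S then γ i else 0)

/-- for any `γ` and any `k`-sparse `β*`,
`‖H_k(γ) − β*‖₂² ≤ 2 ⟨H_k(γ) − β*, γ − β*⟩`. -/
theorem hard_threshold_inner_bound {p k : ℕ} (γ v βstar : Fin p → ℝ)
    (hv : IsHardThreshold k γ v) (hβ : IsSparse k βstar) :
    ∑ i, (v i - βstar i) ^ 2 ≤ 2 * ∑ i, (v i - βstar i) * (γ i - βstar i) := by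
  obtain ⟨S, hScard, hSmax, hvdef⟩ := hv
  classical
  set T : Finset (Fin p) := Finset.univ.filter (fun i => βstar i ≠ 0) with hTdef
  have hTsupp : ∀ i, i ∉ T → βstar i = 0 := by
    intro i hi
    by_contra h
    exact hi (Finset.mem_filter.mpr ⟨Finset.mem_univ i, h⟩)
  have hTcard : T.card ≤ k := by
    have : {i | βstar i ≠ 0} = (T : Set (Fin p)) := by
      ext i; simp [hTdef]
    rw [IsSparse, this, Set.ncard_coe_finset] at hβ
    exact hβ
  -- card comparison: |T \ S| ≤ |S \ T|
  have hcard : (T \ S).card ≤ (S \ T).card := by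
    have h1 : (T \ S).card + (T ∩ S).card = T.card := by
      rw [Finset.card_sdiff_add_card_inter]
    have h2 : (S \ T).card + (S ∩ T).card = S.card := by
      rw [Finset.card_sdiff_add_card_inter]
    have h3 : (T ∩ S).card = (S ∩ T).card := by rw [Finset.inter_comm]
    omega
  -- key: sum of γ² over T \ S ≤ sum over S \ T
  have hkey0 : ∑ i ∈ T \ S, (γ i) ^ 2 ≤ ∑ i ∈ S \ T, (γ i) ^ 2 := by
    by_cases hempty : (S \ T) = ∅
    · have : (T \ S) = ∅ := by
        have := hcard
        rw [hempty] at this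
        simpa using Finset.card_eq_zero.mp (Nat.le_zero.mp this)
      simp [this, hempty]
    · obtain ⟨j₀, hj₀mem, hj₀min⟩ :=
        Finset.exists_min_image (S \ T) (fun j => (γ j) ^ 2)
          (Finset.nonempty_of_ne_empty hempty)
      have hj₀S : j₀ ∈ S := (Finset.mem_sdiff.mp hj₀mem).1
      have step1 : ∑ i ∈ T \ S, (γ i) ^ 2 ≤ (T \ S).card * (γ j₀) ^ 2 := by
        have := Finset.sum_le_card_nsmul (T \ S) (fun i => (γ i) ^ 2) ((γ j₀) ^ 2)
          (by
            intro i hi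
            have hiS : i ∉ S := (Finset.mem_sdiff.mp hi).2
            have habs : |γ i| ≤ |γ j₀| := hSmax j₀ hj₀S i hiS
            have := mul_self_le_mul_self (abs_nonneg (γ i)) habs
            simpa [sq_abs, pow_two] using this)
        simpa [nsmul_eq_mul] using this
      have step2 : ((T \ S).card : ℝ) * (γ j₀) ^ 2 ≤ ((S \ T).card : ℝ) * (γ j₀) ^ 2 := by
        apply mul_le_mul_of_nonneg_right _ (sq_nonneg _)
        exact_mod_cast hcard
      have step3 : ((S \ T).card : ℝ) * (γ j₀) ^ 2 ≤ ∑ i ∈ S \ T, (γ i) ^ 2 := by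
        have := Finset.card_nsmul_le_sum (S \ T) (fun i => (γ i) ^ 2) ((γ j₀) ^ 2)
          (fun i hi => hj₀min i hi)
        simpa [nsmul_eq_mul] using this
      linarith
  -- ∑ (v - γ)² ≤ ∑ (γ - β*)²
  have hkey : ∑ i, (v i - γ i) ^ 2 ≤ ∑ i, (γ i - βstar i) ^ 2 := by
    have hL : ∑ i, (v i - γ i) ^ 2 = ∑ i ∈ Sᶜ, (γ i) ^ 2 := by
      rw [← Finset.sum_add_sum_compl S]
      have h1 : ∑ i ∈ S, (v i - γ i) ^ 2 = 0 := by
        apply Finset.sum_eq_zero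
        intro i hi
        simp [hvdef i, hi]
      have h2 : ∑ i ∈ Sᶜ, (v i - γ i) ^ 2 = ∑ i ∈ Sᶜ, (γ i) ^ 2 := by
        apply Finset.sum_congr rfl
        intro i hi
        have : i ∉ S := Finset.mem_compl.mp hi
        simp [hvdef i, this]
      rw [h1, h2]; ring
    have hR : ∑ i ∈ Tᶜ, (γ i) ^ 2 ≤ ∑ i, (γ i - βstar i) ^ 2 := by
      rw [← Finset.sum_add_sum_compl T (fun i => (γ i - βstar i) ^ 2)]
      have h2 : ∑ i ∈ Tᶜ, (γ i - βstar i) ^ 2 = ∑ i ∈ Tᶜ, (γ i) ^ 2 := by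
        apply Finset.sum_congr rfl
        intro i hi
        rw [hTsupp i (Finset.mem_compl.mp hi)]
        ring
      have h1 : 0 ≤ ∑ i ∈ T, (γ i - βstar i) ^ 2 :=
        Finset.sum_nonneg (fun i _ => sq_nonneg _)
      linarith
    -- decompose Sᶜ and Tᶜ
    have hSc : ∑ i ∈ Sᶜ, (γ i) ^ 2 = ∑ i ∈ Sᶜ ∩ Tᶜ, (γ i) ^ 2 + ∑ i ∈ T \ S, (γ i) ^ 2 := by
      rw [← Finset.sum_union (by
        rw [Finset.disjoint_left]
        intro a ha hb
        exact Finset.mem_compl.mp (Finset.mem_inter.mp ha).2 (Finset.mem_sdiff.mp hb).1)]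
      congr 1
      ext i
      simp only [Finset.mem_union, Finset.mem_inter, Finset.mem_compl, Finset.mem_sdiff]
      tauto
    have hTc : ∑ i ∈ Tᶜ, (γ i) ^ 2 = ∑ i ∈ Sᶜ ∩ Tᶜ, (γ i) ^ 2 + ∑ i ∈ S \ T, (γ i) ^ 2 := by
      rw [← Finset.sum_union (by
        rw [Finset.disjoint_left]
        intro a ha hb
        exact Finset.mem_compl.mp (Finset.mem_inter.mp ha).1 (Finset.mem_sdiff.mp hb).1)]
      congr 1
      ext i
      simp only [Finset.mem_union, Finset.mem_inter, Finset.mem_compl, Finset.mem_sdiff]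
      tauto
    calc ∑ i, (v i - γ i) ^ 2 = ∑ i ∈ Sᶜ, (γ i) ^ 2 := hL
      _ ≤ ∑ i ∈ Tᶜ, (γ i) ^ 2 := by rw [hSc, hTc]; linarith
      _ ≤ ∑ i, (γ i - βstar i) ^ 2 := hR
  -- final algebraic step
  have expand : ∑ i, (v i - βstar i) ^ 2 =
      2 * ∑ i, (v i - βstar i) * (γ i - βstar i)
        + ∑ i, (v i - γ i) ^ 2 - ∑ i, (γ i - βstar i) ^ 2 := by
    rw [Finset.mul_sum, ← Finset.sum_add_distrib, ← Finset.sum_sub_distrib]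
    apply Finset.sum_congr rfl
    intro i _
    ring
  linarith
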